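/- Let 0 < ε₁ < 1/16 and 0 < ε₂ < 1/2, let G : M → M be the bijection determined by G(Φ(ρ,θ)) = Φ(ρ + ε₁P(ρ), θ + ε₂ sin 2θ), let G⁻¹ be its inverse, and let R : M → M be the rotation R(x,y) = (−y,x). Then the image of the ellipse E = {(x,y) : x²/16 + y²/4 = 1} under the composition R ∘ G ∘ R ∘ G⁻¹ is disjoint from E (so the composition R∘S with S = G∘R∘G⁻¹ does not possess the intersection property). -/

import Mathlib

open Real Set

noncomputable def χ (ρ : ℝ) : ℝ := (7 * ρ - 5) / (ρ + 1)
noncomputable def η (ρ : ℝ) : ℝ := (ρ + 5) / (7 - ρ)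
noncomputable def P (ρ : ℝ) : ℝ := (ρ - 1) * (ρ - 3) ^ 2 * (ρ - 5)

/-- The closed annulus `M = {(x,y) : 1 ≤ x² + y² ≤ 25}`. -/
def Mset : Set (ℝ × ℝ) := {p | 1 ≤ p.1 ^ 2 + p.2 ^ 2 ∧ p.1 ^ 2 + p.2 ^ 2 ≤ 25}

/-- The parametrization `Φ(ρ,θ) = (χ(ρ) cos θ, η(ρ) sin θ)`. -/
noncomputable def Φ (ρ θ : ℝ) : ℝ × ℝ := (χ ρ * Real.cos θ, η ρ * Real.sin θ)

/-- The ellipse `E = {(x,y) : x²/16 + y²/4 = 1}`. -/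
def Ell : Set (ℝ × ℝ) := {p | p.1 ^ 2 / 16 + p.2 ^ 2 / 4 = 1}

/-- The rotation by `π/2`:  `R(x,y) = (-y,x)`. -/
def Rot (p : ℝ × ℝ) : ℝ × ℝ := (-p.2, p.1)

/-!
`E` is the curve `ρ = 3` of the parametrization `Φ`, where `P` vanishes, so `G` only slides
points of `E` along `E` and `G⁻¹` maps `E` into `E`. The rotation takes `E` to the ellipse
`{Q = 1}`, `Q(x,y) = x²/4 + y²/16`, and `G` pushes this ellipse into `{Q < 1}`: writing its points
as `Φ(ρ,ψ)`, `Q ∘ Φ` increases with `ρ` and with `cos² ψ`, while `G` does not increase `ρ`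
(`P ≤ 0` on `[1,5]`) nor `cos² ψ` (`θ ↦ θ + ε₂ sin 2θ` pulls angles towards `±π/2`). One of the two
decreases is strict: the radial one off `ρ = 3`, the angular one on `ρ = 3`, where `{Q = 1}`
meets `E` only at `cos² ψ = 1/5`, away from the fixed angles of `θ ↦ θ + ε₂ sin 2θ`.
Rotating back, `R(G(R(G⁻¹(E))))` lies inside `E`, off `E` itself.
-/

lemma exists_cos_eq_sin_eq {a b : ℝ} (h : a ^ 2 + b ^ 2 = 1) :
    ∃ θ : ℝ, cos θ = a ∧ sin θ = b := by
  have hz : ‖(⟨a, b⟩ : ℂ)‖ = 1 := by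
    rw [Complex.norm_def, Complex.normSq_mk, ← sq, ← sq, h, Real.sqrt_one]
  exact ⟨Complex.arg ⟨a, b⟩, by simpa [hz] using Complex.norm_mul_cos_arg ⟨a, b⟩,
    by simpa [hz] using Complex.norm_mul_sin_arg ⟨a, b⟩⟩

lemma sq_div_two_lt_mul_sin {d : ℝ} (hd : d ≠ 0) (hd1 : |d| ≤ 1) : d ^ 2 / 2 < d * sin d := by
  have hd2 : d ^ 2 ≤ 1 := (sq_le_one_iff_abs_le_one d).2 hd1
  rcases hd.lt_or_gt with hneg | hpos
  · have hsin := sin_gt_sub_cube (neg_pos.2 hneg)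
    rw [sin_neg] at hsin
    nlinarith [mul_lt_mul_of_pos_left hsin (neg_pos.2 hneg),
      mul_le_mul_of_nonneg_left hd2 (sq_nonneg d)]
  · have hsin := sin_gt_sub_cube hpos
    nlinarith [mul_lt_mul_of_pos_left hsin hpos, mul_le_mul_of_nonneg_left hd2 (sq_nonneg d)]

lemma cos_add_mul_sin_lt_cos {δ φ : ℝ} (hδ : 0 < δ) (hδ1 : δ ≤ 1) (hs : sin φ ≠ 0) :
    cos (φ + δ * sin φ) < cos φ := by
  -- `cos (φ + d) - cos φ ≤ (1 - cos d) - sin φ * sin d ≤ d ^ 2 / 2 - d * sin d < 0`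
  set d := δ * sin φ with hd
  have hd0 : d ≠ 0 := mul_ne_zero hδ.ne' hs
  have hd1 : |d| ≤ 1 := by
    rw [abs_mul, abs_of_pos hδ]
    exact mul_le_one₀ hδ1 (abs_nonneg _) (abs_sin_le_one φ)
  have hmul := sq_div_two_lt_mul_sin hd0 hd1
  have hcos := one_sub_sq_div_two_le_cos (x := d)
  have hss : 0 < sin φ * sin d := by
    have : 0 < δ * (sin φ * sin d) := by nlinarith [sq_nonneg d]
    exact pos_of_mul_pos_right this hδ.le
  have hδss : d * sin d ≤ sin φ * sin d := by
    rw [hd, mul_assoc]; nlinarith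
  rw [cos_add]
  nlinarith [cos_le_one d, neg_one_le_cos φ]

lemma cos_sq_add_mul_sin_two_mul_lt {ε ψ : ℝ} (hε : 0 < ε) (hε1 : ε ≤ 1 / 2)
    (hs : sin (2 * ψ) ≠ 0) : cos (ψ + ε * sin (2 * ψ)) ^ 2 < cos ψ ^ 2 := by
  have := cos_add_mul_sin_lt_cos (δ := 2 * ε) (by linarith) (by linarith) hs
  rw [cos_sq, cos_sq, show 2 * (ψ + ε * sin (2 * ψ)) = 2 * ψ + 2 * ε * sin (2 * ψ) by ring]
  linarith

lemma cos_sq_add_mul_sin_two_mul_le {ε ψ : ℝ} (hε : 0 < ε) (hε1 : ε ≤ 1 / 2) :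
    cos (ψ + ε * sin (2 * ψ)) ^ 2 ≤ cos ψ ^ 2 := by
  rcases eq_or_ne (sin (2 * ψ)) 0 with hs | hs
  · simp [hs]
  · exact (cos_sq_add_mul_sin_two_mul_lt hε hε1 hs).le

lemma surjective_add_mul_sin_two_mul {ε : ℝ} (hε : |ε| ≤ 1) :
    Function.Surjective fun t => t + ε * sin (2 * t) := by
  intro θ
  have hbound (t : ℝ) : |ε * sin (2 * t)| ≤ 1 := by
    rw [abs_mul]; exact mul_le_one₀ hε (abs_nonneg _) (abs_sin_le_one _)
  have hcont : Continuous fun t : ℝ => t + ε * sin (2 * t) := by fun_prop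
  have hθ : θ ∈ Icc (θ - 1 + ε * sin (2 * (θ - 1))) (θ + 1 + ε * sin (2 * (θ + 1))) :=
    ⟨by linarith [(abs_le.1 (hbound (θ - 1))).2], by linarith [(abs_le.1 (hbound (θ + 1))).1]⟩
  obtain ⟨t, -, ht⟩ := intermediate_value_Icc (by linarith : θ - 1 ≤ θ + 1) hcont.continuousOn hθ
  exact ⟨t, ht⟩

lemma χ_strictMonoOn : StrictMonoOn χ (Ioi (-1)) := by
  intro a ha b hb hab
  simp only [mem_Ioi] at ha hb
  unfold χ
  rw [div_lt_div_iff₀ (by linarith) (by linarith)]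
  nlinarith

lemma η_strictMonoOn : StrictMonoOn η (Iio 7) := by
  intro a ha b hb hab
  simp only [mem_Iio] at ha hb
  unfold η
  rw [div_lt_div_iff₀ (by linarith) (by linarith)]
  nlinarith

lemma χ_three : χ 3 = 4 := by norm_num [χ]

lemma η_three : η 3 = 2 := by norm_num [η]

lemma one_le_η {ρ : ℝ} (h1 : 1 ≤ ρ) (h7 : ρ < 7) : 1 ≤ η ρ := by
  unfold η
  rw [le_div_iff₀ (by linarith)]
  linarith

lemma χ_le_five {ρ : ℝ} (h1 : -1 < ρ) (h5 : ρ ≤ 5) : χ ρ ≤ 5 := by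
  unfold χ
  rw [div_le_iff₀ (by linarith)]
  linarith

lemma η_le_χ {ρ : ℝ} (h1 : 1 ≤ ρ) (h5 : ρ ≤ 5) : η ρ ≤ χ ρ := by
  unfold χ η
  rw [div_le_div_iff₀ (by linarith) (by linarith)]
  nlinarith [mul_nonneg (sub_nonneg.2 h1) (sub_nonneg.2 h5)]

lemma P_nonpos {ρ : ℝ} (h1 : 1 ≤ ρ) (h5 : ρ ≤ 5) : P ρ ≤ 0 := by
  unfold P
  nlinarith [mul_nonneg (mul_nonneg (sub_nonneg.2 h1) (sq_nonneg (ρ - 3))) (sub_nonneg.2 h5)]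

lemma P_neg {ρ : ℝ} (h1 : 1 < ρ) (h3 : ρ ≠ 3) (h5 : ρ < 5) : P ρ < 0 := by
  have : 0 < (ρ - 3) ^ 2 := by positivity [sub_ne_zero.2 h3]
  unfold P
  nlinarith [mul_pos (mul_pos (sub_pos.2 h1) this) (sub_pos.2 h5)]

lemma one_le_add_mul_P {ε ρ : ℝ} (hε : 0 ≤ ε) (hε' : ε ≤ 1 / 16) (h1 : 1 ≤ ρ) :
    1 ≤ ρ + ε * P ρ := by
  have h16 : (ρ - 3) ^ 2 * (5 - ρ) ≤ 16 := by
    nlinarith [mul_nonneg (sub_nonneg.2 h1) (add_nonneg (sq_nonneg (ρ - 5)) zero_le_four)]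
  have hsmall : ε * ((ρ - 3) ^ 2 * (5 - ρ)) ≤ 1 := by
    nlinarith [mul_le_mul_of_nonneg_left h16 hε]
  have hfactor : ρ + ε * P ρ - 1 = (ρ - 1) * (1 - ε * ((ρ - 3) ^ 2 * (5 - ρ))) := by
    unfold P; ring
  nlinarith [mul_nonneg (sub_nonneg.2 h1) (sub_nonneg.2 hsmall)]

lemma Φ_mem_Mset {ρ : ℝ} (hρ : ρ ∈ Icc (1 : ℝ) 5) (θ : ℝ) : Φ ρ θ ∈ Mset := by
  obtain ⟨h1, h5⟩ := hρ
  have hη := one_le_η h1 (by linarith)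
  have hηχ := η_le_χ h1 h5
  have hχ := χ_le_five (by linarith) h5
  have hsc := sin_sq_add_cos_sq θ
  simp only [Mset, Φ, mem_ofPred_eq, mul_pow]
  constructor <;> nlinarith [sq_nonneg (sin θ), sq_nonneg (cos θ),
    mul_le_mul hηχ hηχ (by linarith) (by linarith), mul_le_mul hη hη zero_le_one (by linarith),
    mul_le_mul hχ hχ (by linarith) (by norm_num)]

lemma exists_Φ_eq_of_mem_Mset {p : ℝ × ℝ} (hp : p ∈ Mset) :
    ∃ ρ ∈ Icc (1 : ℝ) 5, ∃ θ, Φ ρ θ = p := by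
  have hχ : ∀ ρ ∈ Icc (1 : ℝ) 5, 0 < χ ρ := fun ρ hρ => by
    linarith [one_le_η hρ.1 (by linarith [hρ.2]), η_le_χ hρ.1 hρ.2]
  have hη : ∀ ρ ∈ Icc (1 : ℝ) 5, 0 < η ρ := fun ρ hρ =>
    zero_lt_one.trans_le (one_le_η hρ.1 (by linarith [hρ.2]))
  set W : ℝ → ℝ := fun ρ => (p.1 / χ ρ) ^ 2 + (p.2 / η ρ) ^ 2
  have hχc : ContinuousOn χ (Icc 1 5) :=
    ContinuousOn.div (by fun_prop) (by fun_prop) fun ρ hρ => (by linarith [hρ.1] : 0 < ρ + 1).ne'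
  have hηc : ContinuousOn η (Icc 1 5) :=
    ContinuousOn.div (by fun_prop) (by fun_prop) fun ρ hρ => (by linarith [hρ.2] : 0 < 7 - ρ).ne'
  have hW : ContinuousOn W (Icc 1 5) :=
    ((continuousOn_const.div hχc fun ρ hρ => (hχ ρ hρ).ne').pow 2).add
      ((continuousOn_const.div hηc fun ρ hρ => (hη ρ hρ).ne').pow 2)
  have hW5 : W 5 ≤ 1 := by
    simp only [W]; norm_num [χ, η]; linarith [hp.2]
  have hW1 : 1 ≤ W 1 := by
    simp only [W]; norm_num [χ, η]; exact hp.1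
  obtain ⟨ρ, hρ, hWρ⟩ := intermediate_value_Icc' (by norm_num) hW ⟨hW5, hW1⟩
  obtain ⟨θ, hc, hs⟩ := exists_cos_eq_sin_eq hWρ
  refine ⟨ρ, hρ, θ, ?_⟩
  simp only [Φ, hc, hs, mul_div_cancel₀ _ (hχ ρ hρ).ne', mul_div_cancel₀ _ (hη ρ hρ).ne']

lemma range_Φ_three : range (Φ 3) = Ell := by
  ext p
  simp only [mem_range, Φ, χ_three, η_three, Ell, mem_ofPred_eq]
  constructor
  · rintro ⟨θ, rfl⟩
    nlinarith [sin_sq_add_cos_sq θ]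
  · intro hp
    obtain ⟨θ, hc, hs⟩ := exists_cos_eq_sin_eq (a := p.1 / 4) (b := p.2 / 2) (by linarith)
    exact ⟨θ, by rw [hc, hs]; ext <;> simp only <;> ring⟩

/-- `Q p = 1` is the equation of the rotated ellipse `Rot '' Ell`. -/
noncomputable def Q (p : ℝ × ℝ) : ℝ := p.1 ^ 2 / 4 + p.2 ^ 2 / 16

lemma rot_mem_Ell_iff (p : ℝ × ℝ) : Rot p ∈ Ell ↔ Q p = 1 := by
  simp only [Rot, Ell, Q, mem_ofPred_eq, neg_sq]
  constructor <;> intro h <;> linarith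

lemma Q_rot_eq_one_iff (p : ℝ × ℝ) : Q (Rot p) = 1 ↔ p ∈ Ell := by
  simp only [Rot, Ell, Q, mem_ofPred_eq, neg_sq]
  constructor <;> intro h <;> linarith

lemma Q_Φ (ρ θ : ℝ) : Q (Φ ρ θ) = χ ρ ^ 2 / 4 * cos θ ^ 2 + η ρ ^ 2 / 16 * sin θ ^ 2 := by
  simp only [Q, Φ]; ring

lemma strictMonoOn_Q_Φ (θ : ℝ) : StrictMonoOn (fun ρ => Q (Φ ρ θ)) (Icc 1 5) := by
  intro a ha b hb hab
  have hχ : χ a < χ b := χ_strictMonoOn (by simp; linarith [ha.1]) (by simp; linarith [hb.1]) hab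
  have hη : η a < η b := η_strictMonoOn (by simp; linarith [ha.2]) (by simp; linarith [hb.2]) hab
  have hηa := one_le_η ha.1 (by linarith [ha.2])
  have hηχ := η_le_χ ha.1 ha.2
  have hsc := sin_sq_add_cos_sq θ
  simp only [Q_Φ]
  have hA : 0 < χ b ^ 2 - χ a ^ 2 := by nlinarith
  have hB : 0 < η b ^ 2 - η a ^ 2 := by nlinarith
  nlinarith [mul_pos hA hB, mul_nonneg hA.le (sq_nonneg (cos θ)),
    mul_nonneg hB.le (sq_nonneg (sin θ))]

lemma Q_Φ_le_of_cos_sq_le {ρ θ θ' : ℝ} (hρ : ρ ∈ Icc (1 : ℝ) 5) (h : cos θ' ^ 2 ≤ cos θ ^ 2) :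
    Q (Φ ρ θ') ≤ Q (Φ ρ θ) := by
  have hη := one_le_η hρ.1 (by linarith [hρ.2])
  have hηχ := η_le_χ hρ.1 hρ.2
  have hcoef : 0 ≤ χ ρ ^ 2 / 4 - η ρ ^ 2 / 16 := by nlinarith
  rw [Q_Φ, Q_Φ, sin_sq, sin_sq]
  nlinarith [mul_nonneg hcoef (sub_nonneg.2 h)]

lemma Q_Φ_lt_of_cos_sq_lt {ρ θ θ' : ℝ} (hρ : ρ ∈ Icc (1 : ℝ) 5) (h : cos θ' ^ 2 < cos θ ^ 2) :
    Q (Φ ρ θ') < Q (Φ ρ θ) := by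
  have hη := one_le_η hρ.1 (by linarith [hρ.2])
  have hηχ := η_le_χ hρ.1 hρ.2
  have hcoef : 0 < χ ρ ^ 2 / 4 - η ρ ^ 2 / 16 := by nlinarith
  rw [Q_Φ, Q_Φ, sin_sq, sin_sq]
  nlinarith [mul_pos hcoef (sub_pos.2 h)]

lemma Q_Φ_add_lt_one {ε₁ ε₂ ρ ψ : ℝ} (hε₁ : 0 < ε₁) (hε₁' : ε₁ ≤ 1 / 16)
    (hε₂ : 0 < ε₂) (hε₂' : ε₂ ≤ 1 / 2) (hρ : ρ ∈ Icc (1 : ℝ) 5) (hQ : Q (Φ ρ ψ) = 1) :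
    Q (Φ (ρ + ε₁ * P ρ) (ψ + ε₂ * sin (2 * ψ))) < 1 := by
  obtain ⟨h1, h5⟩ := hρ
  have hle : ρ + ε₁ * P ρ ≤ ρ := by nlinarith [P_nonpos h1 h5]
  have hmem : ρ + ε₁ * P ρ ∈ Icc (1 : ℝ) 5 := ⟨one_le_add_mul_P hε₁.le hε₁' h1, by linarith⟩
  have hangle : Q (Φ (ρ + ε₁ * P ρ) (ψ + ε₂ * sin (2 * ψ))) ≤ Q (Φ (ρ + ε₁ * P ρ) ψ) :=
    Q_Φ_le_of_cos_sq_le hmem (cos_sq_add_mul_sin_two_mul_le hε₂ hε₂')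
  rcases eq_or_ne ρ 3 with rfl | h3
  · have hcos : cos ψ ^ 2 = 1 / 5 := by
      rw [Q_Φ, χ_three, η_three, sin_sq] at hQ; linarith
    have hsin : sin (2 * ψ) ≠ 0 := by
      intro h
      have : sin (2 * ψ) ^ 2 = 16 / 25 := by rw [sin_two_mul, mul_pow, mul_pow, sin_sq, hcos]; norm_num
      rw [h] at this; norm_num at this
    calc Q (Φ (3 + ε₁ * P 3) (ψ + ε₂ * sin (2 * ψ)))
        < Q (Φ (3 + ε₁ * P 3) ψ) :=
          Q_Φ_lt_of_cos_sq_lt hmem (cos_sq_add_mul_sin_two_mul_lt hε₂ hε₂' hsin)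
      _ ≤ Q (Φ 3 ψ) := (strictMonoOn_Q_Φ ψ).monotoneOn hmem ⟨h1, h5⟩ hle
      _ = 1 := hQ
  · have hbound : 1 < ρ ∧ ρ < 5 := by
      refine ⟨h1.lt_of_ne ?_, h5.lt_of_ne ?_⟩ <;> rintro rfl <;>
        norm_num [Q_Φ, χ, η, sin_sq] at hQ <;> nlinarith [sq_nonneg (cos ψ), cos_sq_le_one ψ]
    have hlt : ρ + ε₁ * P ρ < ρ := by nlinarith [P_neg hbound.1 h3 hbound.2]
    calc Q (Φ (ρ + ε₁ * P ρ) (ψ + ε₂ * sin (2 * ψ)))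
        ≤ Q (Φ (ρ + ε₁ * P ρ) ψ) := hangle
      _ < Q (Φ ρ ψ) := strictMonoOn_Q_Φ ψ hmem ⟨h1, h5⟩ hlt
      _ = 1 := hQ

lemma rot_mem_Mset_iff (p : ℝ × ℝ) : Rot p ∈ Mset ↔ p ∈ Mset := by
  simp only [Rot, Mset, mem_ofPred_eq, neg_sq, add_comm]

lemma mapsTo_Ell_of_leftInvOn {ε : ℝ} {G Ginv : ℝ × ℝ → ℝ × ℝ} (hε : |ε| ≤ 1)
    (hG : ∀ θ, G (Φ 3 θ) = Φ 3 (θ + ε * sin (2 * θ))) (hleft : LeftInvOn Ginv G Mset) :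
    MapsTo Ginv Ell Ell := by
  rintro _ hq
  obtain ⟨θ, rfl⟩ := range_Φ_three ▸ hq
  obtain ⟨t, rfl⟩ := surjective_add_mul_sin_two_mul hε θ
  rw [← hG, hleft (Φ_mem_Mset (by norm_num) t), ← range_Φ_three]
  exact mem_range_self t

theorem stmt9_general (ε₁ ε₂ : ℝ) (hε₁ : 0 < ε₁) (hε₁' : ε₁ < 1 / 16)
    (hε₂ : 0 < ε₂) (hε₂' : ε₂ < 1 / 2)
    (G Ginv : ℝ × ℝ → ℝ × ℝ)
    (hG : ∀ ρ ∈ Icc (1:ℝ) 5, ∀ θ : ℝ,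
      G (Φ ρ θ) = Φ (ρ + ε₁ * P ρ) (θ + ε₂ * Real.sin (2 * θ)))
    (hleft : ∀ p ∈ Mset, Ginv (G p) = p) :
    Disjoint ((Rot ∘ G ∘ Rot ∘ Ginv) '' Ell) Ell := by
  have hG3 (θ : ℝ) : G (Φ 3 θ) = Φ 3 (θ + ε₂ * sin (2 * θ)) := by
    simpa [P] using hG 3 (by norm_num) θ
  have hGinv := mapsTo_Ell_of_leftInvOn (by rw [abs_of_pos hε₂]; linarith) hG3 fun p hp => hleft p hp
  rw [disjoint_left]
  rintro _ ⟨q, hq, rfl⟩ hmem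
  have hRq : Rot (Ginv q) ∈ Mset := by
    obtain ⟨θ, hθ⟩ := range_Φ_three ▸ hGinv hq
    exact (rot_mem_Mset_iff _).2 (hθ ▸ Φ_mem_Mset (by norm_num) θ)
  obtain ⟨ρ, hρ, ψ, hψ⟩ := exists_Φ_eq_of_mem_Mset hRq
  have hQ : Q (Φ ρ ψ) = 1 := hψ ▸ (Q_rot_eq_one_iff _).2 (hGinv hq)
  rw [Function.comp_apply, Function.comp_apply, Function.comp_apply, ← hψ, hG ρ hρ ψ,
    rot_mem_Ell_iff] at hmem
  exact (Q_Φ_add_lt_one hε₁ hε₁'.le hε₂ hε₂'.le hρ hQ).ne hmem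

theorem stmt9 (ε₁ ε₂ : ℝ) (hε₁ : 0 < ε₁) (hε₁' : ε₁ < 1 / 16)
    (hε₂ : 0 < ε₂) (hε₂' : ε₂ < 1 / 2)
    (G Ginv : ℝ × ℝ → ℝ × ℝ)
    (hG : ∀ ρ ∈ Icc (1:ℝ) 5, ∀ θ : ℝ,
      G (Φ ρ θ) = Φ (ρ + ε₁ * P ρ) (θ + ε₂ * Real.sin (2 * θ)))
    (hGM : Set.MapsTo G Mset Mset)
    (hGinvM : Set.MapsTo Ginv Mset Mset)
    (hleft : ∀ p ∈ Mset, Ginv (G p) = p)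
    (hright : ∀ p ∈ Mset, G (Ginv p) = p) :
    Disjoint ((Rot ∘ G ∘ Rot ∘ Ginv) '' Ell) Ell :=
  stmt9_general ε₁ ε₂ hε₁ hε₁' hε₂ hε₂' G Ginv hG hleft
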